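/- If a graph G contains a copy of K_6 and no copy of \widehat{P}_5, then no edge of that K_6 lies in a triangle of G using a vertex outside the K_6; moreover, the sets N_G(a_i) \setminus \{a_1,...,a_6\} for the six vertices a_1,...,a_6 of the K_6 are pairwise disjoint, so one of them has size at most (n-6)/6 when G has n vertices. -/

import Mathlib

open SimpleGraph

/-- `G` contains a copy of `H` (a subgraph isomorphic to `H`). -/
def containsCopy {W V : Type*} (H : SimpleGraph W) (G : SimpleGraph V) : Prop :=
  ∃ f : H →g G, Function.Injective f

/-- The number of triangles of `G`. -/
noncomputable def triCount {V : Type*} (G : SimpleGraph V) : ℕ :=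
  {s : Finset V | G.IsNClique 3 s}.ncard

/-- The number of edges of `G`. -/
noncomputable def edgeCount {V : Type*} (G : SimpleGraph V) : ℕ :=
  G.edgeSet.ncard

/-- The suspension `K_1 ∨ H` of a graph `H`: a new vertex (`none`) joined to all
vertices of `H`. -/
def susp {W : Type*} (H : SimpleGraph W) : SimpleGraph (Option W) where
  Adj a b :=
    match a, b with
    | some x, some y => H.Adj x y
    | some _, none => True
    | none, some _ => True
    | none, none => False
  symm := by
    refine ⟨?_⟩
    rintro (_ | x) (_ | y) h
    · exact h
    · trivial
    · trivial
    · exact h.symm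
  loopless := by
    refine ⟨?_⟩
    rintro (_ | x) h
    · exact h
    · exact H.irrefl h

/-- The Turán number: maximum number of edges of an `H`-free graph on `n` vertices. -/
noncomputable def exNum (n : ℕ) {W : Type*} (H : SimpleGraph W) : ℕ :=
  sSup {m | ∃ G : SimpleGraph (Fin n), ¬ containsCopy H G ∧ edgeCount G = m}

/-- The codegree of the pair `a, b`: number of common neighbours. -/
noncomputable def codeg {V : Type*} (G : SimpleGraph V) (a b : V) : ℕ :=
  (G.neighborSet a ∩ G.neighborSet b).ncard

theorem Finset.exists_ncard_le_div_of_pairwiseDisjoint {ι α : Type*} {s : Finset ι}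
    (hs : s.Nonempty) {F : ι → Set α} (hF : (s : Set ι).PairwiseDisjoint F) {T : Set α}
    (hT : T.Finite) (hFT : ∀ i ∈ s, F i ⊆ T) : ∃ i ∈ s, (F i).ncard ≤ T.ncard / s.card := by
  have hsum : ∑ i ∈ s, (F i).ncard ≤ T.ncard :=
    calc ∑ i ∈ s, (F i).ncard = (⋃ i ∈ s, F i).ncard := by
          rw [← Finset.set_biUnion_coe,
            s.finite_toSet.ncard_biUnion (fun i hi => hT.subset (hFT i hi)) hF,
            finsum_mem_coe_finset]
      _ ≤ T.ncard := Set.ncard_le_ncard (Set.iUnion₂_subset hFT) hT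
  obtain ⟨i, hi, hle⟩ := exists_le_of_sum_le (f := fun i => s.card * (F i).ncard)
    (g := fun _ => T.ncard) hs (by
      rw [← Finset.mul_sum, Finset.sum_const, smul_eq_mul]
      exact Nat.mul_le_mul_left _ hsum)
  exact ⟨i, hi, (Nat.le_div_iff_mul_le hs.card_pos).2 (by rw [mul_comm]; exact hle)⟩

namespace SimpleGraph

variable {V W : Type*} {G : SimpleGraph V}

theorem containsCopy_susp {H : SimpleGraph W} (f : H →g G) (hf : Function.Injective f) (a : V)
    (ha : ∀ w, G.Adj a (f w)) : containsCopy (susp H) G := by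
  refine ⟨⟨fun o => o.elim a f, ?_⟩, ?_⟩
  · rintro (_ | u) (_ | v) huv
    · exact huv.elim
    · exact ha v
    · exact (ha u).symm
    · exact f.map_rel huv
  · rintro (_ | u) (_ | v) huv
    · rfl
    · exact absurd huv (ha v).ne
    · exact absurd huv.symm (ha u).ne
    · exact congrArg some (hf huv)

theorem adj_cons_of_pathGraph_adj {n : ℕ} {t : Set V} (ht : G.IsClique t) {r : Fin (n + 1) → V}
    (hr : Function.Injective r) (hrt : ∀ i, r i ∈ t) {x : V} (hx : G.Adj x (r 0))
    {i j : Fin (n + 2)} (hij : (pathGraph (n + 2)).Adj i j) :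
    G.Adj ((Fin.cons x r : Fin (n + 2) → V) i) ((Fin.cons x r : Fin (n + 2) → V) j) := by
  rw [pathGraph_adj] at hij
  cases i using Fin.cases with
  | zero =>
    cases j using Fin.cases with
    | zero => simp at hij
    | succ j =>
      obtain rfl : j = 0 := by ext; simp at hij; omega
      exact hx
  | succ i =>
    cases j using Fin.cases with
    | zero =>
      obtain rfl : i = 0 := by ext; simp at hij; omega
      exact hx.symm
    | succ j =>
      have hne : i ≠ j := by rintro rfl; simp at hij
      exact ht (hrt i) (hrt j) (hr.ne hne)

theorem exists_pathGraph_hom_cons {n : ℕ} {t : Set V} (ht : G.IsClique t) {r : Fin (n + 1) → V}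
    (hr : Function.Injective r) (hrt : ∀ i, r i ∈ t) {x : V} (hxt : x ∉ t) (hx : G.Adj x (r 0)) :
    ∃ f : pathGraph (n + 2) →g G, Function.Injective f ∧ ∀ i, f i ∈ insert x t := by
  refine ⟨⟨Fin.cons x r, adj_cons_of_pathGraph_adj ht hr hrt hx⟩,
    Fin.cons_injective_iff.2 ⟨by rintro ⟨i, rfl⟩; exact hxt (hrt i), hr⟩, fun i => ?_⟩
  cases i using Fin.cases with
  | zero => exact Set.mem_insert x t
  | succ i => exact Set.mem_insert_of_mem x (hrt i)

/-- Deleting `a` leaves the clique `s \ {a}` in `N(a)`; a Hamiltonian path of it starting at `b`,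
preceded by `x`, is a path on `n + 2` vertices in `N(a)`. -/
theorem IsNClique.containsCopy_susp_pathGraph {n : ℕ} {s : Finset V} (hs : G.IsNClique (n + 2) s)
    {a b x : V} (ha : a ∈ s) (hb : b ∈ s) (hab : a ≠ b) (hx : x ∉ s) (hax : G.Adj a x)
    (hbx : G.Adj b x) : containsCopy (susp (pathGraph (n + 2))) G := by
  classical
  have hb' : b ∈ s.erase a := Finset.mem_erase.2 ⟨hab.symm, hb⟩
  have hcard : ((s.erase a).erase b).card = n := by
    rw [Finset.card_erase_of_mem hb', Finset.card_erase_of_mem ha, hs.card_eq]; rfl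
  set e := ((s.erase a).erase b).equivFinOfCardEq hcard
  set r : Fin (n + 1) → V := Fin.cons b fun i => e.symm i
  have hr : Function.Injective r := Fin.cons_injective_iff.2
    ⟨by rintro ⟨i, hi⟩; exact (Finset.mem_erase.1 (e.symm i).2).1 hi,
      Subtype.val_injective.comp e.symm.injective⟩
  have hrs : ∀ i, r i ∈ s.erase a := fun i => by
    cases i using Fin.cases with
    | zero => exact hb'
    | succ i => exact Finset.mem_of_mem_erase (e.symm i).2
  have hclique : G.IsClique (s.erase a : Set V) :=
    hs.isClique.subset (Finset.coe_subset.2 (s.erase_subset a))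
  obtain ⟨f, hf, hfs⟩ := exists_pathGraph_hom_cons hclique hr hrs
    (fun h => hx (Finset.mem_of_mem_erase h)) hbx.symm
  refine containsCopy_susp f hf a fun i => ?_
  rcases hfs i with hxi | hi
  · exact hxi ▸ hax
  · obtain ⟨hia, his⟩ := Finset.mem_erase.1 hi
    exact hs.isClique ha his (Ne.symm hia)

end SimpleGraph

/-- If `G` is `\widehat{P}_5`-free and contains a `K_6` on vertex set `s`, then no
edge of the `K_6` lies in a triangle through an outside vertex, the external
neighbourhoods of its six vertices are pairwise disjoint, and one of them has
size at most `(n - 6)/6`. -/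
theorem K6_block_structure {V : Type*} [Fintype V] (G : SimpleGraph V)
    (hP5 : ¬ containsCopy (susp (pathGraph 6)) G)
    (s : Finset V) (hs : G.IsNClique 6 s) :
    (∀ a ∈ s, ∀ b ∈ s, a ≠ b → ∀ x : V, x ∉ s → ¬ (G.Adj a x ∧ G.Adj b x)) ∧
    (∀ a ∈ s, ∀ b ∈ s, a ≠ b →
      Disjoint (G.neighborSet a \ ↑s) (G.neighborSet b \ ↑s)) ∧
    (∃ a ∈ s, (G.neighborSet a \ ↑s).ncard ≤ (Fintype.card V - 6) / 6) := by
  have hno_triangle : ∀ a ∈ s, ∀ b ∈ s, a ≠ b → ∀ x : V, x ∉ s → ¬ (G.Adj a x ∧ G.Adj b x) :=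
    fun a ha b hb hab x hx ⟨hax, hbx⟩ =>
      hP5 (hs.containsCopy_susp_pathGraph (n := 4) ha hb hab hx hax hbx)
  have hdisj : ∀ a ∈ s, ∀ b ∈ s, a ≠ b →
      Disjoint (G.neighborSet a \ ↑s) (G.neighborSet b \ ↑s) :=
    fun a ha b hb hab => Set.disjoint_left.2 fun x ⟨hax, hxs⟩ ⟨hbx, _⟩ =>
      hno_triangle a ha b hb hab x hxs ⟨hax, hbx⟩
  refine ⟨hno_triangle, hdisj, ?_⟩
  have hcompl : (↑s : Set V)ᶜ.ncard = Fintype.card V - 6 := by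
    rw [Set.ncard_compl, Set.ncard_coe_finset, hs.card_eq, Nat.card_eq_fintype_card]
  obtain ⟨a, ha, hle⟩ := Finset.exists_ncard_le_div_of_pairwiseDisjoint
    (Finset.card_pos.1 (by rw [hs.card_eq]; norm_num))
    (fun a ha b hb hab => hdisj a ha b hb hab) (Set.toFinite _)
    (fun _ _ => Set.sdiff_subset_compl _ _)
  exact ⟨a, ha, by rwa [hcompl, hs.card_eq] at hle⟩
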